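/- Consider Frozen Adam on the quadratic model f(x) = (1/2) xᵀ H x, i.e. the iteration m_{t+1} = β₁ m_t + (1−β₁) H x_t, x_{t+1} = x_t − η P⁻¹ m_{t+1}, with step size η > 0, momentum parameter β₁ ∈ [0,1), initialization m_0 = 0 and arbitrary x_0 ∈ ℝ^d. Then the critical step size sup{ η > 0 : for every x_0 ∈ ℝ^d, sup_{t≥0} ‖x_t‖ < ∞ } equals 2(1+β₁) / ((1−β₁) λ_max(P⁻¹H)). -/

import Mathlib

/-!
Eliminating the momentum, the iterates satisfy
`x_{t+2} = (1 + β₁) x_{t+1} - β₁ x_t - η (1 - β₁) P⁻¹H x_{t+1}`.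
Writing `P⁻¹ = Qᴴ Q`, the matrix `P⁻¹H` is similar to the symmetric matrix `Q H Qᴴ`, so it has
a basis of eigenvectors with nonnegative eigenvalues, and the coefficient of `x_t` along an
eigenvector of eigenvalue `λ` solves the scalar recurrence with characteristic polynomial
`z² - (1 + β₁ - c) z + β₁`, `c = η (1 - β₁) λ`. For `c ≤ 2 (1 + β₁)` both roots lie in the closed
unit disc and their product `β₁ < 1` keeps one of them inside, so the coefficient stays bounded;
for `c > 2 (1 + β₁)` the polynomial is negative at `-1`, so a real root lies below `-1` and the
coefficient blows up. Hence `η` is stable exactly when `η (1 - β₁) λ_max ≤ 2 (1 + β₁)`.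
-/

open Matrix

/-- The Frozen Adam iterates on the quadratic model `f(x) = ½ xᵀHx`:
`fadamIter H P η β₁ x₀ t = (x_t, m_t)` where `m_{t+1} = β₁ m_t + (1−β₁) H x_t`,
`x_{t+1} = x_t − η P⁻¹ m_{t+1}`, with `x_0 = x₀` and `m_0 = 0`. -/
noncomputable def fadamIter {d : ℕ} (H P : Matrix (Fin d) (Fin d) ℝ) (η β₁ : ℝ)
    (x₀ : Fin d → ℝ) : ℕ → (Fin d → ℝ) × (Fin d → ℝ)
  | 0 => (x₀, 0)
  | t + 1 =>
      let p := fadamIter H P η β₁ x₀ t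
      let m' := β₁ • p.2 + (1 - β₁) • (H *ᵥ p.1)
      (p.1 - η • (P⁻¹ *ᵥ m'), m')

section LinearRecurrence

variable {𝕜 : Type*} [NormedField 𝕜] {r s : 𝕜} {a : ℕ → 𝕜}

lemma sub_mul_eq_pow_mul_of_recurrence (ha : ∀ t, a (t + 2) = (r + s) * a (t + 1) - r * s * a t)
    (t : ℕ) : a (t + 1) - s * a t = r ^ t * (a 1 - s * a 0) := by
  induction t with
  | zero => simp
  | succ t ih => rw [ha, pow_succ]; linear_combination r * ih

lemma exists_bound_of_recurrence (hr : ‖r‖ ≤ 1) (hs : ‖s‖ < 1)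
    (ha : ∀ t, a (t + 2) = (r + s) * a (t + 1) - r * s * a t) : ∃ C, ∀ t, ‖a t‖ ≤ C := by
  set K := ‖a 1 - s * a 0‖
  have hstep (t : ℕ) : ‖a (t + 1)‖ ≤ K + ‖s‖ * ‖a t‖ := calc
    ‖a (t + 1)‖ = ‖r ^ t * (a 1 - s * a 0) + s * a t‖ := by
      rw [← sub_mul_eq_pow_mul_of_recurrence ha, sub_add_cancel]
    _ ≤ ‖r‖ ^ t * K + ‖s‖ * ‖a t‖ := by
      grw [norm_add_le, norm_mul, norm_mul, norm_pow]
    _ ≤ K + ‖s‖ * ‖a t‖ := by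
      grw [pow_le_one₀ (norm_nonneg r) hr, one_mul]
  -- `‖a t‖ ≤ B` propagates since `K + ‖s‖ B ≤ (1 - ‖s‖) B + ‖s‖ B = B`.
  refine ⟨max ‖a 0‖ (K / (1 - ‖s‖)), fun t => ?_⟩
  induction t with
  | zero => exact le_max_left _ _
  | succ t ih =>
    have hK : K ≤ (1 - ‖s‖) * max ‖a 0‖ (K / (1 - ‖s‖)) := by
      rw [← div_le_iff₀' (by linarith)]; exact le_max_right _ _
    nlinarith [hstep t, norm_nonneg s]

lemma not_exists_bound_of_recurrence (hr : 1 < ‖r‖) (hs : ‖s‖ ≤ 1) (h01 : a 1 - s * a 0 ≠ 0)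
    (ha : ∀ t, a (t + 2) = (r + s) * a (t + 1) - r * s * a t) : ¬ ∃ C, ∀ t, ‖a t‖ ≤ C := by
  rintro ⟨C, hC⟩
  obtain ⟨t, ht⟩ := pow_unbounded_of_one_lt (2 * C / ‖a 1 - s * a 0‖) hr
  have hgrowth : ‖r‖ ^ t * ‖a 1 - s * a 0‖ ≤ 2 * C := calc
    ‖r‖ ^ t * ‖a 1 - s * a 0‖ = ‖a (t + 1) - s * a t‖ := by
      rw [← norm_pow, ← norm_mul, ← sub_mul_eq_pow_mul_of_recurrence ha t]
    _ ≤ ‖a (t + 1)‖ + ‖s‖ * ‖a t‖ := by grw [norm_sub_le, norm_mul]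
    _ ≤ C + 1 * C := by
      have hC₀ : 0 ≤ C := (norm_nonneg _).trans (hC t)
      gcongr; exacts [hC _, hC t]
    _ = 2 * C := by ring
  rw [div_lt_iff₀ (norm_pos_iff.mpr h01)] at ht
  linarith

end LinearRecurrence

lemma Complex.norm_le_one_of_quadratic_eq_zero {τ β : ℝ} (hβ : β ≤ 1) (hτ : |τ| ≤ 1 + β) {z : ℂ}
    (hz : z ^ 2 - τ * z + β = 0) : ‖z‖ ≤ 1 := by
  have hre : z.re ^ 2 - z.im ^ 2 - τ * z.re + β = 0 := by
    simpa [pow_two] using congrArg Complex.re hz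
  have him : z.im * (2 * z.re - τ) = 0 := by
    have := congrArg Complex.im hz
    simp [pow_two] at this
    linarith
  rw [← sq_le_one_iff₀ (norm_nonneg z), Complex.sq_norm, Complex.normSq_apply]
  rcases mul_eq_zero.mp him with h | h
  · -- a real root `x` with `|x| > 1` would force `|x| ≤ β` by `|τ| ≤ 1 + β`
    rw [h, mul_zero, add_zero, ← sq, sq_le_one_iff_abs_le_one]
    rw [h] at hre
    rcases abs_le.mp hτ with ⟨h1, h2⟩
    by_contra! hx
    rcases lt_abs.mp hx with hx | hx <;> nlinarith
  · -- non-real roots are conjugate, with product `β`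
    have hx : z.re = τ / 2 := by linarith
    rw [hx] at hre ⊢
    nlinarith

lemma exists_roots_norm_le_one_of_le {β c : ℝ} (hβ0 : 0 ≤ β) (hβ1 : β < 1) (hc0 : 0 ≤ c)
    (hc : c ≤ 2 * (1 + β)) :
    ∃ r s : ℂ, ‖r‖ ≤ 1 ∧ ‖s‖ < 1 ∧ r + s = ((1 + β - c : ℝ) : ℂ) ∧ r * s = β := by
  set τ : ℝ := 1 + β - c
  have hτ : |τ| ≤ 1 + β := abs_le.mpr ⟨by linarith, by linarith⟩
  obtain ⟨z, hz⟩ := exists_quadratic_eq_zero (K := ℂ) (b := -τ) (c := β)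
    one_ne_zero (IsAlgClosed.exists_eq_mul_self _)
  have hz' : z ^ 2 - τ * z + β = 0 := by linear_combination hz
  have hw' : (τ - z) ^ 2 - τ * (τ - z) + β = 0 := by linear_combination hz
  have hprod : z * (τ - z) = β := by linear_combination -hz
  have hnorm : ‖z‖ * ‖(τ : ℂ) - z‖ < 1 := by
    rw [← norm_mul, hprod, Complex.norm_real, Real.norm_of_nonneg hβ0]; exact hβ1
  have hz1 := Complex.norm_le_one_of_quadratic_eq_zero hβ1.le hτ hz'
  have hw1 := Complex.norm_le_one_of_quadratic_eq_zero hβ1.le hτ hw'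
  rcases hw1.lt_or_eq with hw | hw
  · exact ⟨z, τ - z, hz1, hw, by ring, hprod⟩
  · refine ⟨τ - z, z, hw1, ?_, by ring, by rw [mul_comm, hprod]⟩
    rwa [hw, mul_one] at hnorm

lemma exists_real_roots_of_lt {β c : ℝ} (hβ0 : 0 ≤ β) (hc : 2 * (1 + β) < c) :
    ∃ r s : ℝ, r < -1 ∧ -1 < s ∧ s ≤ 0 ∧ r + s = 1 + β - c ∧ r * s = β := by
  set τ : ℝ := 1 + β - c
  have hτ : τ < -(1 + β) := by linarith
  have hD : 0 ≤ τ ^ 2 - 4 * β := by nlinarith [sq_nonneg (1 - β)]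
  set e := √(τ ^ 2 - 4 * β)
  have he : e ^ 2 = τ ^ 2 - 4 * β := Real.sq_sqrt hD
  have hprod : (τ - e) / 2 * ((τ + e) / 2) = β := by linear_combination -he / 4
  -- the characteristic polynomial is negative at `-1`
  have hneg : (1 + (τ - e) / 2) * (1 + (τ + e) / 2) < 0 := by nlinarith
  have he0 : 0 ≤ e := Real.sqrt_nonneg _
  refine ⟨(τ - e) / 2, (τ + e) / 2, by nlinarith, by nlinarith, by nlinarith, by ring, hprod⟩

/-- The coefficient of `x_t` along an eigenvector of `P⁻¹H` with eigenvalue `λ`, for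
`c = η (1 - β₁) λ`. -/
def momentumSeq (β c : ℝ) : ℕ → ℝ
  | 0 => 1
  | 1 => 1 - c
  | t + 2 => (1 + β - c) * momentumSeq β c (t + 1) - β * momentumSeq β c t

lemma momentumSeq_bounded_iff {β c : ℝ} (hβ0 : 0 ≤ β) (hβ1 : β < 1) (hc0 : 0 ≤ c) :
    (∃ C, ∀ t, ‖momentumSeq β c t‖ ≤ C) ↔ c ≤ 2 * (1 + β) := by
  constructor
  · intro hbdd
    by_contra! hc
    obtain ⟨r, s, hr, hs, hs0, hsum, hprod⟩ := exists_real_roots_of_lt hβ0 hc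
    refine not_exists_bound_of_recurrence (r := r) (s := s) ?_ ?_ ?_ ?_ hbdd
    · rw [Real.norm_eq_abs, abs_of_neg (by linarith)]; linarith
    · rw [Real.norm_eq_abs, abs_le]; constructor <;> linarith
    · simp only [momentumSeq]; linarith
    · intro t; rw [hsum, hprod]; rfl
  · intro hc
    obtain ⟨r, s, hr, hs, hsum, hprod⟩ := exists_roots_norm_le_one_of_le hβ0 hβ1 hc0 hc
    obtain ⟨C, hC⟩ := exists_bound_of_recurrence (a := fun t => (momentumSeq β c t : ℂ)) hr hs
      (fun t => by rw [hsum, hprod, momentumSeq]; push_cast; ring)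
    exact ⟨C, fun t => by simpa using hC t⟩

section Dynamics

variable {d : ℕ} (H P : Matrix (Fin d) (Fin d) ℝ) (η β₁ : ℝ) (x₀ : Fin d → ℝ)

lemma fadamIter_fst_one :
    (fadamIter H P η β₁ x₀ 1).1 = x₀ - (η * (1 - β₁)) • ((P⁻¹ * H) *ᵥ x₀) := by
  simp [fadamIter, mulVec_smul, ← mulVec_mulVec, smul_smul]

lemma fadamIter_fst_add_two (t : ℕ) :
    (fadamIter H P η β₁ x₀ (t + 2)).1 =
      (1 + β₁) • (fadamIter H P η β₁ x₀ (t + 1)).1 - β₁ • (fadamIter H P η β₁ x₀ t).1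
        - (η * (1 - β₁)) • ((P⁻¹ * H) *ᵥ (fadamIter H P η β₁ x₀ (t + 1)).1) := by
  have hm : η • (P⁻¹ *ᵥ (fadamIter H P η β₁ x₀ (t + 1)).2) =
      (fadamIter H P η β₁ x₀ t).1 - (fadamIter H P η β₁ x₀ (t + 1)).1 := by
    rw [fadamIter]; simp only; abel
  rw [fadamIter]
  simp only [mulVec_add, mulVec_smul, ← mulVec_mulVec]
  linear_combination (norm := module) (-β₁) • hm

lemma fadamIter_fst_sum_eigenvectors {ι : Type*} [Fintype ι] {v : ι → Fin d → ℝ} {μ : ι → ℝ}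
    (hv : ∀ i, (P⁻¹ * H) *ᵥ v i = μ i • v i) (c : ι → ℝ) (t : ℕ) :
    (fadamIter H P η β₁ (∑ i, c i • v i) t).1 =
      ∑ i, (c i * momentumSeq β₁ (η * (1 - β₁) * μ i) t) • v i := by
  induction t using Nat.twoStepInduction with
  | zero => simp [fadamIter, momentumSeq]
  | one =>
    simp only [fadamIter_fst_one, mulVec_sum, mulVec_smul, hv, Finset.smul_sum,
      ← Finset.sum_sub_distrib, momentumSeq]
    refine Finset.sum_congr rfl fun i _ => ?_
    module
  | more t ih₀ ih₁ =>
    simp only [fadamIter_fst_add_two, ih₀, ih₁, mulVec_sum, mulVec_smul, hv, Finset.smul_sum,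
      ← Finset.sum_sub_distrib, momentumSeq]
    refine Finset.sum_congr rfl fun i _ => ?_
    module

end Dynamics

lemma fadamIter_bounded_iff {d : ℕ} (H P : Matrix (Fin d) (Fin d) ℝ) {η β₁ : ℝ} (hη : 0 ≤ η)
    (hβ₀ : 0 ≤ β₁) (hβ₁ : β₁ < 1) {ι : Type*} [Fintype ι] {b : Module.Basis ι ℝ (Fin d → ℝ)}
    {μ : ι → ℝ} (hb : ∀ i, (P⁻¹ * H) *ᵥ b i = μ i • b i) (hμ : ∀ i, 0 ≤ μ i) {i₀ : ι}
    (hi₀ : ∀ i, μ i ≤ μ i₀) :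
    (∀ x₀, ∃ C, ∀ t, ‖(fadamIter H P η β₁ x₀ t).1‖ ≤ C) ↔ η * (1 - β₁) * μ i₀ ≤ 2 * (1 + β₁) := by
  have hc (i : ι) : 0 ≤ η * (1 - β₁) * μ i := mul_nonneg (mul_nonneg hη (by linarith)) (hμ i)
  constructor
  · intro hbdd
    obtain ⟨C, hC⟩ := hbdd (b i₀)
    rw [← momentumSeq_bounded_iff hβ₀ hβ₁ (hc i₀)]
    refine ⟨C / ‖b i₀‖, fun t => ?_⟩
    have hx := fadamIter_fst_sum_eigenvectors H P η β₁ (v := fun _ : Unit => b i₀)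
      (fun _ => hb i₀) (fun _ => 1) t
    simp only [Finset.univ_unique, Finset.sum_singleton, one_smul, one_mul] at hx
    rw [le_div_iff₀ (norm_pos_iff.mpr (b.ne_zero i₀)), ← norm_smul, ← hx]
    exact hC t
  · intro hcrit x₀
    have hbdd (i : ι) : ∃ C, ∀ t, ‖momentumSeq β₁ (η * (1 - β₁) * μ i) t‖ ≤ C :=
      (momentumSeq_bounded_iff hβ₀ hβ₁ (hc i)).mpr <|
        (mul_le_mul_of_nonneg_left (hi₀ i) (mul_nonneg hη (by linarith))).trans hcrit
    choose C hC using hbdd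
    refine ⟨∑ i, ‖b.repr x₀ i‖ * C i * ‖b i‖, fun t => ?_⟩
    have hx := fadamIter_fst_sum_eigenvectors H P η β₁ hb (b.repr x₀) t
    rw [b.sum_repr] at hx
    rw [hx]
    refine (norm_sum_le _ _).trans (Finset.sum_le_sum fun i _ => ?_)
    rw [norm_smul, norm_mul]
    gcongr
    exact hC i t

section Spectral

variable {n : Type*} [Fintype n]

lemma Matrix.setOf_eigenvalue_eq_range {K ι : Type*} [Field K] [Fintype ι] {A : Matrix n n K}
    (b : Module.Basis ι K (n → K)) {μ : ι → K} (hb : ∀ i, A *ᵥ b i = μ i • b i) :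
    {c | ∃ v : n → K, v ≠ 0 ∧ A *ᵥ v = c • v} = Set.range μ := by
  refine Set.Subset.antisymm ?_ (Set.range_subset_iff.mpr fun i => ⟨b i, b.ne_zero i, hb i⟩)
  rintro c ⟨v, hv, hAv⟩
  have hcoord (i : ι) : c * b.repr v i = μ i * b.repr v i := by
    have hAv' : A *ᵥ v = ∑ i, (μ i * b.repr v i) • b i := by
      conv_lhs => rw [← b.sum_repr v]
      simp only [mulVec_sum, mulVec_smul, hb, smul_smul, mul_comm]
    have h := congrArg (fun w => b.repr w i) (hAv.symm.trans hAv')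
    simpa only [map_smul, Finsupp.smul_apply, smul_eq_mul, b.repr_sum_self] using h
  obtain ⟨i, hi⟩ : ∃ i, b.repr v i ≠ 0 := by
    by_contra! h0
    exact hv (b.repr.injective (Finsupp.ext (by simpa using h0)))
  exact ⟨i, (mul_right_cancel₀ hi (hcoord i)).symm⟩

variable [DecidableEq n]

lemma Matrix.eigenvalue_inv_mul_nonneg {H P : Matrix n n ℝ} (hH : H.PosSemidef) (hP : P.PosDef)
    {v : n → ℝ} {μ : ℝ} (hv : v ≠ 0) (h : (P⁻¹ * H) *ᵥ v = μ • v) : 0 ≤ μ := by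
  have hHv : H *ᵥ v = μ • (P *ᵥ v) := by
    rw [← mulVec_smul, ← h, mulVec_mulVec,
      mul_nonsing_inv_cancel_left P H ((isUnit_iff_isUnit_det P).mp hP.isUnit)]
  have hquad : star v ⬝ᵥ (H *ᵥ v) = μ * (star v ⬝ᵥ (P *ᵥ v)) := by
    rw [hHv, dotProduct_smul, smul_eq_mul]
  exact nonneg_of_mul_nonneg_left (hquad ▸ hH.dotProduct_mulVec_nonneg v)
    (hP.dotProduct_mulVec_pos hv)

lemma Matrix.exists_basis_eigenvectors_conjTranspose_mul_mul {B H : Matrix n n ℝ} (hB : IsUnit B)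
    (hH : H.IsHermitian) :
    ∃ (b : Module.Basis n ℝ (n → ℝ)) (μ : n → ℝ), ∀ i, (Bᴴ * B * H) *ᵥ b i = μ i • b i := by
  have hS : (B * H * Bᴴ).IsHermitian := isHermitian_mul_mul_conjTranspose B hH
  have := hB.invertible
  -- `Bᴴ` carries eigenvectors of the Hermitian matrix `B H Bᴴ` to eigenvectors of `Bᴴ B H`
  let e := (WithLp.linearEquiv 2 ℝ (n → ℝ)).trans (Bᴴ.toLinearEquiv' inferInstance)
  refine ⟨hS.eigenvectorBasis.toBasis.map e, hS.eigenvalues, fun i => ?_⟩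
  have hb : (hS.eigenvectorBasis.toBasis.map e) i = Bᴴ *ᵥ ⇑(hS.eigenvectorBasis i) := rfl
  rw [hb, mulVec_mulVec, Matrix.mul_assoc, Matrix.mul_assoc, ← Matrix.mul_assoc B,
    ← mulVec_mulVec, hS.mulVec_eigenvectorBasis, mulVec_smul]

open scoped MatrixOrder in
lemma Matrix.PosDef.exists_basis_eigenvectors_inv_mul {H P : Matrix n n ℝ} (hP : P.PosDef)
    (hH : H.IsHermitian) :
    ∃ (b : Module.Basis n ℝ (n → ℝ)) (μ : n → ℝ), ∀ i, (P⁻¹ * H) *ᵥ b i = μ i • b i := by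
  set Q := CFC.sqrt P⁻¹
  have hQQ : Qᴴ * Q = P⁻¹ := by
    rw [(CFC.sqrt_nonneg P⁻¹).posSemidef.isHermitian.eq]
    exact CFC.sqrt_mul_sqrt_self _ hP.inv.posSemidef.nonneg
  have hQ : IsUnit Q := isUnit_of_mul_isUnit_right (hQQ ▸ hP.inv.isUnit)
  simpa only [hQQ] using exists_basis_eigenvectors_conjTranspose_mul_mul hQ hH

end Spectral

/-- **Stability of Frozen Adam.**  For Frozen Adam with momentum `β₁ ∈ [0,1)` and fixed
symmetric positive definite preconditioner `P` on the quadratic model, the critical step size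
`sup { η > 0 | ∀ x₀, sup_t ‖x_t‖ < ∞ }` equals `2(1+β₁) / ((1−β₁) λ_max(P⁻¹H))`,
where `λ_max(P⁻¹H)` is the largest (real) eigenvalue of `P⁻¹H`. -/
theorem frozen_adam_critical_step_size {d : ℕ} (H P : Matrix (Fin d) (Fin d) ℝ)
    (hH : H.PosSemidef) (hH0 : H ≠ 0) (hP : P.PosDef)
    (β₁ : ℝ) (hβ₁ : β₁ ∈ Set.Ico (0 : ℝ) 1) :
    sSup {η : ℝ | 0 < η ∧ ∀ x₀ : Fin d → ℝ, ∃ C : ℝ, ∀ t : ℕ,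
        ‖(fadamIter H P η β₁ x₀ t).1‖ ≤ C}
      = 2 * (1 + β₁) /
        ((1 - β₁) * sSup {c : ℝ | ∃ v : Fin d → ℝ, v ≠ 0 ∧ (P⁻¹ * H) *ᵥ v = c • v}) := by
  obtain ⟨hβ₀, hβ₁⟩ := hβ₁
  obtain ⟨b, μ, hb⟩ := hP.exists_basis_eigenvectors_inv_mul hH.isHermitian
  have hμ (i : Fin d) : 0 ≤ μ i := eigenvalue_inv_mul_nonneg hH hP (b.ne_zero i) (hb i)
  obtain ⟨i₁, hi₁⟩ : ∃ i, μ i ≠ 0 := by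
    by_contra! h0
    have hPH : P⁻¹ * H = 0 := toLin'.injective (b.ext fun i => by simp [hb, h0])
    exact hH0 <| by
      rw [← mul_nonsing_inv_cancel_left P H (P.isUnit_iff_isUnit_det.mp hP.isUnit), hPH,
        Matrix.mul_zero]
  have : Nonempty (Fin d) := ⟨i₁⟩
  obtain ⟨i₀, hi₀⟩ := Finite.exists_max μ
  have hL : 0 < μ i₀ := ((hμ i₁).lt_of_ne' hi₁).trans_le (hi₀ i₁)
  have hspec : sSup {c : ℝ | ∃ v : Fin d → ℝ, v ≠ 0 ∧ (P⁻¹ * H) *ᵥ v = c • v} = μ i₀ := by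
    rw [setOf_eigenvalue_eq_range b hb]
    exact IsGreatest.csSup_eq ⟨⟨i₀, rfl⟩, Set.forall_mem_range.mpr hi₀⟩
  have hcrit : {η : ℝ | 0 < η ∧ ∀ x₀ : Fin d → ℝ, ∃ C : ℝ, ∀ t : ℕ,
      ‖(fadamIter H P η β₁ x₀ t).1‖ ≤ C} = Set.Ioc 0 (2 * (1 + β₁) / ((1 - β₁) * μ i₀)) := by
    ext η
    refine and_congr_right fun hη => ?_
    rw [fadamIter_bounded_iff H P hη.le hβ₀ hβ₁ hb hμ hi₀, le_div_iff₀ (by nlinarith), mul_assoc]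
  rw [hcrit, hspec, csSup_Ioc (by positivity)]
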